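/- arXiv:2011.11477 — 4 statements merged into one kernel-verified Lean document; each statement's English description precedes it below -/
import Mathlib

section
/- Let X ∈ ℝ^{n×p}, let β ∈ ℝ^p, and let C_xx ∈ ℝ^{p×p} be symmetric positive semidefinite. Suppose the rows of X are fixed, Y = Xβ + ε with ε ~ N(0, σ²I_n), and the test pair is (x*, y*) with x* ~ N(0, C_xx), y* = x*ᵀβ + ε*, ε* ~ N(0, σ²), all independent. Let β̂ = X_{PCA,k}^† Y be the PCA-OLS estimator. Then the risk satisfies E_{Y,x*,y*}[(x*ᵀβ̂ − y*)² | X] = βᵀΠ_k^⊥ C_xx Π_k^⊥ β + (σ²/n)·tr(((1/n)X_{PCA,k}ᵀX_{PCA,k})^† C_xx) + σ². -/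
open Matrix MeasureTheory ProbabilityTheory
open scoped BigOperators NNReal

/-- `P` is the Moore–Penrose pseudoinverse of `A`. -/
def IsMoorePenrose {m n : Type*} [Fintype m] [Fintype n]
    (A : Matrix m n ℝ) (P : Matrix n m ℝ) : Prop :=
  A * P * A = A ∧ P * A * P = P ∧ (A * P)ᵀ = A * P ∧ (P * A)ᵀ = P * A

/-!
For a fixed estimate `b`, the test error `x*ᵀ(b - β) - ε*` is centred with second moment
`(b - β)ᵀ C_xx (b - β) + σ²`. The PCA-OLS estimate is affine in the training noise,
`β̂ - β = (X_k^† X - I) β + X_k^† ε`, so averaging this quadratic form over `ε ~ N(0, σ² I)` leaves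
the squared bias plus `σ² tr(X_k^†ᵀ C_xx X_k^†)`; no Gaussian feature beyond the first two moments
is used. The explicit pseudoinverse `X_k^† = ∑_{i<k} (n λ̃ᵢ)^{-1/2} ũᵢ vᵢᵀ` then gives
`X_k^† X = Π_k` (because `Xᵀ vᵢ = √(n λ̃ᵢ) ũᵢ`) and `X_k^† X_k^†ᵀ = (1/n) ((1/n) X_kᵀ X_k)^†`.
-/

section CenteredMoments

variable {μ : Measure ℝ} [IsProbabilityMeasure μ]

lemma integral_sub_sq_of_integral_eq_zero (hμ : MemLp id 2 μ) (hmean : ∫ x, x ∂μ = 0) (a : ℝ) :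
    ∫ x, (a - x) ^ 2 ∂μ = a ^ 2 + ∫ x, x ^ 2 ∂μ := by
  have hx : Integrable (fun x : ℝ => x) μ := hμ.integrable one_le_two
  have hlin : Integrable (fun x : ℝ => a ^ 2 - 2 * a * x) μ :=
    (integrable_const _).sub (hx.const_mul _)
  have hx2 : Integrable (fun x : ℝ => x ^ 2) μ := hμ.integrable_sq
  calc ∫ x, (a - x) ^ 2 ∂μ = ∫ x, (a ^ 2 - 2 * a * x) + x ^ 2 ∂μ := by
        congr 1; funext x; ring
    _ = a ^ 2 + ∫ x, x ^ 2 ∂μ := by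
        rw [integral_add hlin hx2, integral_sub (integrable_const _) (hx.const_mul _),
          integral_const_mul, hmean]
        simp

variable {ι : Type*} [Fintype ι]

lemma memLp_eval_pi (hμ : MemLp id 2 μ) (i : ι) :
    MemLp (fun x : ι → ℝ => x i) 2 (Measure.pi fun _ => μ) :=
  hμ.comp_measurePreserving (measurePreserving_eval _ i)

lemma integrable_mul_eval_pi (hμ : MemLp id 2 μ) (i j : ι) :
    Integrable (fun x : ι → ℝ => x i * x j) (Measure.pi fun _ => μ) :=
  (memLp_eval_pi hμ i).integrable_mul (memLp_eval_pi hμ j)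

lemma integral_mul_eval_pi [DecidableEq ι] (hmean : ∫ x, x ∂μ = 0) (i j : ι) :
    ∫ x : ι → ℝ, x i * x j ∂Measure.pi (fun _ => μ) = if i = j then ∫ x, x ^ 2 ∂μ else 0 := by
  split_ifs with hij
  · subst hij
    simp_rw [← sq]
    exact integral_comp_eval (μ := fun _ => μ) (f := fun t : ℝ => t ^ 2)
      (continuous_pow 2).aestronglyMeasurable
  · have hind : IndepFun (fun x : ι → ℝ => x i) (fun x => x j) (Measure.pi fun _ => μ) :=
      (iIndepFun_pi (X := fun _ => id) fun _ => aemeasurable_id).indepFun hij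
    rw [hind.integral_fun_mul_eq_mul_integral (measurable_pi_apply i).aestronglyMeasurable
      (measurable_pi_apply j).aestronglyMeasurable]
    simp [integral_eval, hmean]

lemma dotProduct_mulVec_self_eq_sum (M : Matrix ι ι ℝ) (x : ι → ℝ) :
    x ⬝ᵥ (M *ᵥ x) = ∑ i, ∑ j, M i j * (x i * x j) := by
  simp only [dotProduct, mulVec, Finset.mul_sum]
  exact Finset.sum_congr rfl fun i _ => Finset.sum_congr rfl fun j _ => by ring

lemma integrable_dotProduct_mulVec_pi (hμ : MemLp id 2 μ) (M : Matrix ι ι ℝ) :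
    Integrable (fun x : ι → ℝ => x ⬝ᵥ (M *ᵥ x)) (Measure.pi fun _ => μ) := by
  simp_rw [dotProduct_mulVec_self_eq_sum]
  exact integrable_finsetSum _ fun i _ => integrable_finsetSum _ fun j _ =>
    (integrable_mul_eval_pi hμ i j).const_mul _

lemma integral_dotProduct_mulVec_pi (hμ : MemLp id 2 μ) (hmean : ∫ x, x ∂μ = 0)
    (M : Matrix ι ι ℝ) :
    ∫ x, x ⬝ᵥ (M *ᵥ x) ∂Measure.pi (fun _ => μ) = (∫ x, x ^ 2 ∂μ) * trace M := by
  classical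
  simp_rw [dotProduct_mulVec_self_eq_sum]
  have hint : ∀ i j, Integrable (fun x : ι → ℝ => M i j * (x i * x j)) (Measure.pi fun _ => μ) :=
    fun i j => (integrable_mul_eval_pi hμ i j).const_mul _
  rw [integral_finsetSum _ fun i _ => integrable_finsetSum _ fun j _ => hint i j]
  simp_rw [integral_finsetSum _ fun j _ => hint _ j, integral_const_mul,
    integral_mul_eval_pi hmean, mul_ite, mul_zero, Finset.sum_ite_eq, Finset.mem_univ, if_true,
    trace, diag, Finset.mul_sum, mul_comm]

lemma integrable_dotProduct_pi (hμ : MemLp id 2 μ) (b : ι → ℝ) :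
    Integrable (fun x : ι → ℝ => b ⬝ᵥ x) (Measure.pi fun _ => μ) :=
  integrable_finsetSum _ fun i _ =>
    ((memLp_eval_pi hμ i).integrable one_le_two).const_mul _

lemma integral_dotProduct_pi (hμ : MemLp id 2 μ) (hmean : ∫ x, x ∂μ = 0) (b : ι → ℝ) :
    ∫ x, b ⬝ᵥ x ∂Measure.pi (fun _ => μ) = 0 := by
  simp only [dotProduct]
  rw [integral_finsetSum _ fun i _ =>
    ((memLp_eval_pi hμ i).integrable one_le_two).const_mul _]
  simp [integral_const_mul, integral_eval, hmean]

variable {κ : Type*} [Fintype κ]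

lemma mulVec_dotProduct_mulVec_mulVec (A : Matrix κ ι ℝ) (C : Matrix κ κ ℝ) (x : ι → ℝ) :
    (A *ᵥ x) ⬝ᵥ (C *ᵥ (A *ᵥ x)) = x ⬝ᵥ ((Aᵀ * C * A) *ᵥ x) := by
  rw [dotProduct_comm, dotProduct_mulVec, dotProduct_comm, ← mulVec_transpose, mulVec_mulVec,
    mulVec_mulVec, Matrix.mul_assoc]

lemma affine_quadForm_eq (m : κ → ℝ) (A : Matrix κ ι ℝ) (C : Matrix κ κ ℝ) (x : ι → ℝ) :
    (m + A *ᵥ x) ⬝ᵥ (C *ᵥ (m + A *ᵥ x))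
      = m ⬝ᵥ (C *ᵥ m) + (m ᵥ* (C * A) + (C *ᵥ m) ᵥ* A) ⬝ᵥ x
        + x ⬝ᵥ ((Aᵀ * C * A) *ᵥ x) := by
  have hcross₁ : m ⬝ᵥ (C *ᵥ (A *ᵥ x)) = (m ᵥ* (C * A)) ⬝ᵥ x := by
    rw [mulVec_mulVec, dotProduct_mulVec]
  have hcross₂ : (A *ᵥ x) ⬝ᵥ (C *ᵥ m) = ((C *ᵥ m) ᵥ* A) ⬝ᵥ x := by
    rw [dotProduct_comm, dotProduct_mulVec]
  rw [mulVec_add, dotProduct_add, add_dotProduct, add_dotProduct, hcross₁, hcross₂,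
    mulVec_dotProduct_mulVec_mulVec, add_dotProduct]
  ring

lemma integrable_affine_quadForm_pi (hμ : MemLp id 2 μ) (m : κ → ℝ) (A : Matrix κ ι ℝ)
    (C : Matrix κ κ ℝ) :
    Integrable (fun x : ι → ℝ => (m + A *ᵥ x) ⬝ᵥ (C *ᵥ (m + A *ᵥ x)))
      (Measure.pi fun _ => μ) := by
  simp_rw [affine_quadForm_eq]
  exact ((integrable_const _).add (integrable_dotProduct_pi hμ _)).add
    (integrable_dotProduct_mulVec_pi hμ _)

lemma integral_affine_quadForm_pi (hμ : MemLp id 2 μ) (hmean : ∫ x, x ∂μ = 0) (m : κ → ℝ)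
    (A : Matrix κ ι ℝ) (C : Matrix κ κ ℝ) :
    ∫ x, (m + A *ᵥ x) ⬝ᵥ (C *ᵥ (m + A *ᵥ x)) ∂Measure.pi (fun _ => μ)
      = m ⬝ᵥ (C *ᵥ m) + (∫ x, x ^ 2 ∂μ) * trace (Aᵀ * C * A) := by
  set b := m ᵥ* (C * A) + (C *ᵥ m) ᵥ* A
  have hlin : Integrable (fun x : ι → ℝ => m ⬝ᵥ (C *ᵥ m) + b ⬝ᵥ x) (Measure.pi fun _ => μ) :=
    (integrable_const _).add (integrable_dotProduct_pi hμ _)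
  simp_rw [affine_quadForm_eq]
  rw [integral_add hlin (integrable_dotProduct_mulVec_pi hμ _),
    integral_add (integrable_const _) (integrable_dotProduct_pi hμ _),
    integral_dotProduct_pi hμ hmean, integral_dotProduct_mulVec_pi hμ hmean]
  simp

end CenteredMoments

section PredictionRisk

variable {ι κ ι' : Type*} [Fintype ι] [Fintype κ] [Fintype ι'] {μ ν : Measure ℝ}
  [IsProbabilityMeasure μ] [IsProbabilityMeasure ν]

lemma integral_prediction_error_sq (hμ : MemLp id 2 μ) (hμ₀ : ∫ x, x ∂μ = 0)
    (hν : MemLp id 2 ν) (hν₀ : ∫ x, x ∂ν = 0) (S : Matrix κ ι ℝ) (b β : κ → ℝ) :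
    ∫ z, ∫ e, ((S *ᵥ z) ⬝ᵥ b - ((S *ᵥ z) ⬝ᵥ β + e)) ^ 2 ∂ν ∂Measure.pi (fun _ => μ)
      = (∫ x, x ^ 2 ∂μ) * ((b - β) ⬝ᵥ ((S * Sᵀ) *ᵥ (b - β))) + ∫ x, x ^ 2 ∂ν := by
  have hsq : ∀ z : ι → ℝ, ((S *ᵥ z) ⬝ᵥ (b - β)) ^ 2
      = (0 + S *ᵥ z) ⬝ᵥ (vecMulVec (b - β) (b - β) *ᵥ (0 + S *ᵥ z)) := by
    intro z
    rw [zero_add, vecMulVec_mulVec, dotProduct_comm (b - β)]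
    simp [sq]
  have htr : trace (Sᵀ * vecMulVec (b - β) (b - β) * S) = (b - β) ⬝ᵥ ((S * Sᵀ) *ᵥ (b - β)) := by
    rw [mul_vecMulVec, vecMulVec_mul, trace_vecMulVec, ← mulVec_mulVec, dotProduct_mulVec,
      mulVec_transpose, dotProduct_comm]
  simp_rw [← sub_sub, ← dotProduct_sub, integral_sub_sq_of_integral_eq_zero hν hν₀, hsq]
  rw [integral_add (integrable_affine_quadForm_pi hμ _ _ _) (integrable_const _),
    integral_affine_quadForm_pi hμ hμ₀, htr]
  simp

theorem integral_risk_linear_estimator (hμ : MemLp id 2 μ)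
    (hμ₀ : ∫ x, x ∂μ = 0) (hν : MemLp id 2 ν) (hν₀ : ∫ x, x ∂ν = 0) (S : Matrix κ ι ℝ)
    (A : Matrix κ ι' ℝ) (y₀ : ι' → ℝ) (β : κ → ℝ) :
    ∫ ε, ∫ z, ∫ e, ((S *ᵥ z) ⬝ᵥ (A *ᵥ (y₀ + ε)) - ((S *ᵥ z) ⬝ᵥ β + e)) ^ 2
        ∂ν ∂Measure.pi (fun _ => μ) ∂Measure.pi (fun _ => ν)
      = (∫ x, x ^ 2 ∂μ) * ((A *ᵥ y₀ - β) ⬝ᵥ ((S * Sᵀ) *ᵥ (A *ᵥ y₀ - β))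
          + (∫ x, x ^ 2 ∂ν) * trace (Aᵀ * (S * Sᵀ) * A)) + ∫ x, x ^ 2 ∂ν := by
  have hbias : ∀ ε, A *ᵥ (y₀ + ε) - β = (A *ᵥ y₀ - β) + A *ᵥ ε := fun ε => by
    rw [mulVec_add]; abel
  simp_rw [integral_prediction_error_sq hμ hμ₀ hν hν₀, hbias]
  rw [integral_add ((integrable_affine_quadForm_pi hν _ _ _).const_mul _) (integrable_const _),
    integral_const_mul, integral_affine_quadForm_pi hν hν₀]
  simp

end PredictionRisk

lemma integral_sq_gaussianReal_zero (v : ℝ≥0) : ∫ x, x ^ 2 ∂gaussianReal 0 v = v := by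
  rw [← variance_id_gaussianReal (μ := 0) (v := v),
    variance_of_integral_eq_zero aemeasurable_id integral_id_gaussianReal]
  rfl

namespace IsMoorePenrose

variable {m n : Type*} [Fintype m] [Fintype n] {A : Matrix m n ℝ} {P Q : Matrix n m ℝ}

lemma transpose (h : IsMoorePenrose A P) : IsMoorePenrose Aᵀ Pᵀ := by
  obtain ⟨h₁, h₂, h₃, h₄⟩ := h
  refine ⟨?_, ?_, ?_, ?_⟩
  · rw [← transpose_mul, ← transpose_mul, ← Matrix.mul_assoc, h₁]
  · rw [← transpose_mul, ← transpose_mul, ← Matrix.mul_assoc, h₂]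
  · rw [← transpose_mul, h₄, h₄]
  · rw [← transpose_mul, h₃, h₃]

lemma eq_mul_mul (hP : IsMoorePenrose A P) (hQ : IsMoorePenrose A Q) : P = P * A * Q :=
  calc P = P * (A * P)ᵀ := by rw [hP.2.2.1, ← Matrix.mul_assoc, hP.2.1]
    _ = P * (A * Q * A * P)ᵀ := by rw [hQ.1]
    _ = P * (A * P)ᵀ * (A * Q)ᵀ := by
        simp only [transpose_mul, Matrix.mul_assoc]
    _ = P * A * Q := by
        simp only [hP.2.2.1, hQ.2.2.1, ← Matrix.mul_assoc, hP.2.1]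

lemma unique (hP : IsMoorePenrose A P) (hQ : IsMoorePenrose A Q) : P = Q := by
  have hQP : Qᵀ = Qᵀ * Aᵀ * Pᵀ := hQ.transpose.eq_mul_mul hP.transpose
  rw [← transpose_mul, ← transpose_mul, ← Matrix.mul_assoc, transpose_inj] at hQP
  rw [hP.eq_mul_mul hQ, ← hQP]

lemma smul (h : IsMoorePenrose A P) {c : ℝ} (hc : c ≠ 0) : IsMoorePenrose (c • A) (c⁻¹ • P) := by
  obtain ⟨h₁, h₂, h₃, h₄⟩ := h
  refine ⟨?_, ?_, ?_, ?_⟩ <;>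
    simp [Matrix.smul_mul, Matrix.mul_smul, smul_smul, h₁, h₂, h₃, h₄, hc]

lemma transpose_mul_self (h : IsMoorePenrose A P) : IsMoorePenrose (Aᵀ * A) (P * Pᵀ) := by
  obtain ⟨h₁, h₂, h₃, h₄⟩ := h
  have hAAP : Aᵀ * A * P = Aᵀ := by rw [Matrix.mul_assoc, ← h₃, ← transpose_mul, h₁]
  have hPPA : P * Pᵀ * Aᵀ = P := by
    rw [Matrix.mul_assoc, ← transpose_mul, h₃, ← Matrix.mul_assoc, h₂]
  have hl : Aᵀ * A * (P * Pᵀ) = P * A := by rw [← Matrix.mul_assoc, hAAP, ← transpose_mul, h₄]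
  have hr : P * Pᵀ * (Aᵀ * A) = P * A := by rw [← Matrix.mul_assoc, hPPA]
  refine ⟨?_, ?_, ?_, ?_⟩
  · rw [Matrix.mul_assoc, hr, Matrix.mul_assoc, ← Matrix.mul_assoc A, h₁]
  · rw [hr, ← Matrix.mul_assoc, h₂]
  · rw [hl, h₄]
  · rw [hr, h₄]

end IsMoorePenrose

section RankOneSums

variable {ι l m n : Type*} {S : Finset ι}

lemma transpose_sum_smul_vecMulVec (c : ι → ℝ) (a : ι → l → ℝ) (b : ι → m → ℝ) :
    (∑ i ∈ S, c i • vecMulVec (a i) (b i))ᵀ = ∑ i ∈ S, c i • vecMulVec (b i) (a i) := by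
  simp [transpose_sum]

lemma sum_smul_vecMulVec_mul_of_transpose_mulVec [Fintype m] {X : Matrix m n ℝ} {s : ι → ℝ}
    (hs : ∀ i ∈ S, s i ≠ 0) {u : ι → n → ℝ} {v : ι → m → ℝ}
    (hX : ∀ i ∈ S, Xᵀ *ᵥ v i = s i • u i) :
    (∑ i ∈ S, (s i)⁻¹ • vecMulVec (u i) (v i)) * X = ∑ i ∈ S, vecMulVec (u i) (u i) := by
  rw [Matrix.sum_mul]
  refine Finset.sum_congr rfl fun i hi => ?_
  rw [Matrix.smul_mul, vecMulVec_mul, ← mulVec_transpose, hX i hi, vecMulVec_smul, smul_smul,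
    inv_mul_cancel₀ (hs i hi), one_smul]

variable [Fintype m] [DecidableEq ι]

lemma sum_smul_vecMulVec_mul_sum_smul_vecMulVec (c d : ι → ℝ) (a : ι → l → ℝ) (b e : ι → m → ℝ)
    (f : ι → n → ℝ) (horth : ∀ i ∈ S, ∀ j ∈ S, b i ⬝ᵥ e j = if i = j then 1 else 0) :
    (∑ i ∈ S, c i • vecMulVec (a i) (b i)) * (∑ j ∈ S, d j • vecMulVec (e j) (f j))
      = ∑ i ∈ S, (c i * d i) • vecMulVec (a i) (f i) := by
  simp_rw [Matrix.sum_mul, Matrix.mul_sum, Matrix.smul_mul, Matrix.mul_smul, smul_smul,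
    vecMulVec_mul_vecMulVec]
  refine Finset.sum_congr rfl fun i hi => ?_
  rw [Finset.sum_eq_single_of_mem i hi fun j hj hji => ?_]
  · rw [horth i hi i hi, if_pos rfl, one_smul]
  · rw [horth i hi j hj, if_neg hji.symm, zero_smul]
    ext; simp [vecMulVec_apply]

lemma isMoorePenrose_sum_smul_vecMulVec [Fintype n] {s : ι → ℝ} (hs : ∀ i ∈ S, s i ≠ 0)
    {u : ι → n → ℝ} {v : ι → m → ℝ} (hu : ∀ i ∈ S, ∀ j ∈ S, u i ⬝ᵥ u j = if i = j then 1 else 0)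
    (hv : ∀ i ∈ S, ∀ j ∈ S, v i ⬝ᵥ v j = if i = j then 1 else 0) :
    IsMoorePenrose (∑ i ∈ S, s i • vecMulVec (v i) (u i))
      (∑ i ∈ S, (s i)⁻¹ • vecMulVec (u i) (v i)) := by
  have hAP : (∑ i ∈ S, s i • vecMulVec (v i) (u i)) * (∑ i ∈ S, (s i)⁻¹ • vecMulVec (u i) (v i))
      = ∑ i ∈ S, (1 : ℝ) • vecMulVec (v i) (v i) := by
    rw [sum_smul_vecMulVec_mul_sum_smul_vecMulVec _ _ _ _ _ _ hu]
    exact Finset.sum_congr rfl fun i hi => by rw [mul_inv_cancel₀ (hs i hi)]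
  have hPA : (∑ i ∈ S, (s i)⁻¹ • vecMulVec (u i) (v i)) * (∑ i ∈ S, s i • vecMulVec (v i) (u i))
      = ∑ i ∈ S, (1 : ℝ) • vecMulVec (u i) (u i) := by
    rw [sum_smul_vecMulVec_mul_sum_smul_vecMulVec _ _ _ _ _ _ hv]
    exact Finset.sum_congr rfl fun i hi => by rw [inv_mul_cancel₀ (hs i hi)]
  refine ⟨?_, ?_, ?_, ?_⟩
  · rw [hAP, sum_smul_vecMulVec_mul_sum_smul_vecMulVec _ _ _ _ _ _ hv]
    simp_rw [one_mul]
  · rw [hPA, sum_smul_vecMulVec_mul_sum_smul_vecMulVec _ _ _ _ _ _ hu]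
    simp_rw [one_mul]
  · rw [hAP, transpose_sum_smul_vecMulVec]
  · rw [hPA, transpose_sum_smul_vecMulVec]

lemma IsMoorePenrose.eq_sum_smul_vecMulVec [Fintype n] {s : ι → ℝ} (hs : ∀ i ∈ S, s i ≠ 0)
    {u : ι → n → ℝ} {v : ι → m → ℝ}
    (hu : ∀ i ∈ S, ∀ j ∈ S, u i ⬝ᵥ u j = if i = j then 1 else 0)
    (hv : ∀ i ∈ S, ∀ j ∈ S, v i ⬝ᵥ v j = if i = j then 1 else 0) {P : Matrix n m ℝ}
    (hP : IsMoorePenrose (∑ i ∈ S, s i • vecMulVec (v i) (u i)) P) :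
    P = ∑ i ∈ S, (s i)⁻¹ • vecMulVec (u i) (v i) :=
  hP.unique (isMoorePenrose_sum_smul_vecMulVec hs hu hv)

lemma sum_smul_vecMulVec_mulVec (c : ι → ℝ) (a : ι → l → ℝ) (b e : ι → m → ℝ)
    (horth : ∀ i ∈ S, ∀ j ∈ S, b i ⬝ᵥ e j = if i = j then 1 else 0) {i : ι} (hi : i ∈ S) :
    (∑ j ∈ S, c j • vecMulVec (a j) (b j)) *ᵥ e i = c i • a i := by
  simp_rw [Matrix.sum_mulVec, Matrix.smul_mulVec, vecMulVec_mulVec]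
  rw [Finset.sum_eq_single_of_mem i hi fun j hj hji => ?_]
  · simp [horth i hi i hi]
  · simp [horth j hj i hi, hji]

end RankOneSums

lemma transpose_mulVec_eq_smul_of_transpose_mul_eq_sum {ι m n : Type*} [Fintype ι]
    [DecidableEq ι] [Fintype m] [Fintype n] {X : Matrix m n ℝ} {d : ι → ℝ} {u : ι → n → ℝ}
    (hu : ∀ i j, u i ⬝ᵥ u j = if i = j then 1 else 0)
    (hX : Xᵀ * X = ∑ j, d j • vecMulVec (u j) (u j)) {i : ι} {s : ℝ} {w : m → ℝ}
    (hs : s ≠ 0) (hsd : s * s = d i) (hXu : X *ᵥ u i = s • w) :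
    Xᵀ *ᵥ w = s • u i := by
  have heig : Xᵀ *ᵥ (X *ᵥ u i) = d i • u i := by
    rw [mulVec_mulVec, hX, sum_smul_vecMulVec_mulVec _ _ _ _ (fun i _ j _ => hu i j)
      (Finset.mem_univ i)]
  apply smul_right_injective _ hs
  show s • (Xᵀ *ᵥ w) = s • (s • u i)
  rw [← mulVec_smul, ← hXu, heig, smul_smul, hsd]


theorem pca_ols_risk_decomposition_general
    (n p k : ℕ) (hn : 0 < n)
    (X : Matrix (Fin n) (Fin p) ℝ) (β : Fin p → ℝ)
    (Cxx Csqrt : Matrix (Fin p) (Fin p) ℝ)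
    (hCxx : Cxx = Csqrt * Csqrtᵀ)
    (σ : ℝ)
    -- eigendecomposition of the empirical covariance (1/n) XᵀX, sorted decreasingly
    (lamt : Fin p → ℝ) (ut : Fin p → Fin p → ℝ)
    (hlamt_pos : ∀ i : Fin p, (i : ℕ) < k → 0 < lamt i)
    (hut_orth : ∀ i j, ut i ⬝ᵥ ut j = if i = j then (1 : ℝ) else 0)
    (hemp : (1 / (n : ℝ)) • (Xᵀ * X) = ∑ j, lamt j • vecMulVec (ut j) (ut j))
    -- rank-k truncated SVD of X: singular triplets (√(n λ̃ᵢ), vᵢ, ũᵢ) for i < k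
    (v : Fin p → Fin n → ℝ)
    (hv_orth : ∀ i j : Fin p, (i : ℕ) < k → (j : ℕ) < k →
        v i ⬝ᵥ v j = if i = j then (1 : ℝ) else 0)
    (hsvd : ∀ i : Fin p, (i : ℕ) < k → X *ᵥ ut i = Real.sqrt ((n : ℝ) * lamt i) • v i)
    (Xk : Matrix (Fin n) (Fin p) ℝ)
    (hXk : Xk = ∑ i ∈ Finset.univ.filter (fun i : Fin p => (i : ℕ) < k),
        Real.sqrt ((n : ℝ) * lamt i) • vecMulVec (v i) (ut i))
    -- Moore–Penrose pseudoinverses used in the estimator and in the variance term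
    (Xkdag : Matrix (Fin p) (Fin n) ℝ) (hXkdag : IsMoorePenrose Xk Xkdag)
    (Bdag : Matrix (Fin p) (Fin p) ℝ)
    (hBdag : IsMoorePenrose ((1 / (n : ℝ)) • (Xkᵀ * Xk)) Bdag)
    -- projection onto the orthogonal complement of the top-k empirical eigenspace
    (PikPerp : Matrix (Fin p) (Fin p) ℝ)
    (hPerp : PikPerp = 1 - ∑ i ∈ Finset.univ.filter (fun i : Fin p => (i : ℕ) < k),
        vecMulVec (ut i) (ut i)) :
    (∫ ε : Fin n → ℝ,
      (∫ z : Fin p → ℝ,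
        (∫ e : ℝ,
            ((Csqrt *ᵥ z) ⬝ᵥ (Xkdag *ᵥ (X *ᵥ β + ε)) - ((Csqrt *ᵥ z) ⬝ᵥ β + e)) ^ 2
          ∂(gaussianReal 0 ⟨σ ^ 2, sq_nonneg σ⟩))
        ∂(Measure.pi fun _ : Fin p => gaussianReal 0 1))
      ∂(Measure.pi fun _ : Fin n => gaussianReal 0 ⟨σ ^ 2, sq_nonneg σ⟩))
    = β ⬝ᵥ ((PikPerp * Cxx * PikPerp) *ᵥ β)
      + (σ ^ 2 / (n : ℝ)) * Matrix.trace (Bdag * Cxx) + σ ^ 2 := by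
  classical
  set S := Finset.univ.filter fun i : Fin p => (i : ℕ) < k
  set s : Fin p → ℝ := fun i => Real.sqrt ((n : ℝ) * lamt i)
  have hn' : (n : ℝ) ≠ 0 := (Nat.cast_pos.2 hn).ne'
  have hSk : ∀ i ∈ S, (i : ℕ) < k := fun i hi => (Finset.mem_filter.1 hi).2
  have hnlamt : ∀ i ∈ S, 0 < (n : ℝ) * lamt i := fun i hi =>
    mul_pos (Nat.cast_pos.2 hn) (hlamt_pos i (hSk i hi))
  have hs : ∀ i ∈ S, s i ≠ 0 := fun i hi => (Real.sqrt_pos.2 (hnlamt i hi)).ne'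
  have hXtX : Xᵀ * X = ∑ j, ((n : ℝ) * lamt j) • vecMulVec (ut j) (ut j) := by
    simp_rw [← smul_smul, ← Finset.smul_sum, ← hemp, smul_smul, mul_one_div_cancel hn', one_smul]
  have hXtv : ∀ i ∈ S, Xᵀ *ᵥ v i = s i • ut i := fun i hi =>
    transpose_mulVec_eq_smul_of_transpose_mul_eq_sum hut_orth hXtX (hs i hi)
      (Real.mul_self_sqrt (hnlamt i hi).le) (hsvd i (hSk i hi))
  have hXkdag_eq : Xkdag = ∑ i ∈ S, (s i)⁻¹ • vecMulVec (ut i) (v i) :=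
    (hXk ▸ hXkdag).eq_sum_smul_vecMulVec hs (fun i _ j _ => hut_orth i j)
      (fun i hi j hj => hv_orth i j (hSk i hi) (hSk j hj))
  have hproj : Xkdag * X = 1 - PikPerp := by
    rw [hPerp, sub_sub_cancel, hXkdag_eq, sum_smul_vecMulVec_mul_of_transpose_mulVec hs hXtv]
  have hgram : Xkdag * Xkdagᵀ = (1 / (n : ℝ)) • Bdag := by
    rw [hBdag.unique (hXkdag.transpose_mul_self.smul (one_div_ne_zero hn')), smul_smul,
      mul_inv_cancel₀ (one_div_ne_zero hn'), one_smul]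
  have hPerp_symm : PikPerpᵀ = PikPerp := by simp [hPerp, transpose_sum]
  have hbias : (Xkdag *ᵥ (X *ᵥ β) - β) ⬝ᵥ (Cxx *ᵥ (Xkdag *ᵥ (X *ᵥ β) - β))
      = β ⬝ᵥ ((PikPerp * Cxx * PikPerp) *ᵥ β) := by
    rw [mulVec_mulVec, hproj, sub_mulVec, one_mulVec, sub_sub_cancel_left, mulVec_neg,
      neg_dotProduct, dotProduct_neg, neg_neg, mulVec_dotProduct_mulVec_mulVec, hPerp_symm]
  have hvar : trace (Xkdagᵀ * Cxx * Xkdag) = 1 / n * trace (Bdag * Cxx) := by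
    rw [trace_mul_comm, ← Matrix.mul_assoc, hgram, Matrix.smul_mul, trace_smul, smul_eq_mul]
  -- instance search does not find `IsProbabilityMeasure` for `gaussianReal 0 ⟨σ ^ 2, _⟩` itself
  set V : ℝ≥0 := ⟨σ ^ 2, sq_nonneg σ⟩
  rw [integral_risk_linear_estimator (memLp_id_gaussianReal 2)
    integral_id_gaussianReal (memLp_id_gaussianReal 2) integral_id_gaussianReal,
    integral_sq_gaussianReal_zero, integral_sq_gaussianReal_zero, ← hCxx, hbias, hvar]
  change 1 * (_ + σ ^ 2 * _) + σ ^ 2 = _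
  ring

theorem pca_ols_risk_decomposition
    (n p k : ℕ) (hn : 0 < n) (hk : k < min n p)
    (X : Matrix (Fin n) (Fin p) ℝ) (β : Fin p → ℝ)
    (Cxx Csqrt : Matrix (Fin p) (Fin p) ℝ)
    (hCxx : Cxx = Csqrt * Csqrtᵀ)
    (σ : ℝ) (hσ : 0 < σ)
    -- eigendecomposition of the empirical covariance (1/n) XᵀX, sorted decreasingly
    (lamt : Fin p → ℝ) (ut : Fin p → Fin p → ℝ)
    (hlamt_anti : ∀ i j : Fin p, i ≤ j → lamt j ≤ lamt i)
    (hlamt_pos : ∀ i : Fin p, (i : ℕ) < k → 0 < lamt i)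
    (hut_orth : ∀ i j, ut i ⬝ᵥ ut j = if i = j then (1 : ℝ) else 0)
    (hemp : (1 / (n : ℝ)) • (Xᵀ * X) = ∑ j, lamt j • vecMulVec (ut j) (ut j))
    -- rank-k truncated SVD of X: singular triplets (√(n λ̃ᵢ), vᵢ, ũᵢ) for i < k
    (v : Fin p → Fin n → ℝ)
    (hv_orth : ∀ i j : Fin p, (i : ℕ) < k → (j : ℕ) < k →
        v i ⬝ᵥ v j = if i = j then (1 : ℝ) else 0)
    (hsvd : ∀ i : Fin p, (i : ℕ) < k → X *ᵥ ut i = Real.sqrt ((n : ℝ) * lamt i) • v i)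
    (Xk : Matrix (Fin n) (Fin p) ℝ)
    (hXk : Xk = ∑ i ∈ Finset.univ.filter (fun i : Fin p => (i : ℕ) < k),
        Real.sqrt ((n : ℝ) * lamt i) • vecMulVec (v i) (ut i))
    -- Moore–Penrose pseudoinverses used in the estimator and in the variance term
    (Xkdag : Matrix (Fin p) (Fin n) ℝ) (hXkdag : IsMoorePenrose Xk Xkdag)
    (Bdag : Matrix (Fin p) (Fin p) ℝ)
    (hBdag : IsMoorePenrose ((1 / (n : ℝ)) • (Xkᵀ * Xk)) Bdag)
    -- projection onto the orthogonal complement of the top-k empirical eigenspace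
    (PikPerp : Matrix (Fin p) (Fin p) ℝ)
    (hPerp : PikPerp = 1 - ∑ i ∈ Finset.univ.filter (fun i : Fin p => (i : ℕ) < k),
        vecMulVec (ut i) (ut i)) :
    (∫ ε : Fin n → ℝ,
      (∫ z : Fin p → ℝ,
        (∫ e : ℝ,
            ((Csqrt *ᵥ z) ⬝ᵥ (Xkdag *ᵥ (X *ᵥ β + ε)) - ((Csqrt *ᵥ z) ⬝ᵥ β + e)) ^ 2
          ∂(gaussianReal 0 ⟨σ ^ 2, sq_nonneg σ⟩))
        ∂(Measure.pi fun _ : Fin p => gaussianReal 0 1))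
      ∂(Measure.pi fun _ : Fin n => gaussianReal 0 ⟨σ ^ 2, sq_nonneg σ⟩))
    = β ⬝ᵥ ((PikPerp * Cxx * PikPerp) *ᵥ β)
      + (σ ^ 2 / (n : ℝ)) * Matrix.trace (Bdag * Cxx) + σ ^ 2 :=
  pca_ols_risk_decomposition_general n p k hn X β Cxx Csqrt hCxx σ lamt ut hlamt_pos hut_orth hemp v
    hv_orth hsvd Xk hXk Xkdag hXkdag Bdag hBdag PikPerp hPerp
end

section
/- Let X ∈ ℝ^{n×p} and let C_xx ∈ ℝ^{p×p} be symmetric positive semidefinite with eigenvalues λ₁ ≥ … ≥ λ_p ≥ 0. Let (1/n)XᵀX have eigenvalues λ̃₁ ≥ λ̃₂ ≥ … with orthonormal eigenvectors ũᵢ, let k < min(n,p), Π_k = Σ_{i=1}^k ũᵢũᵢᵀ, Π_k^⊥ = I_p − Π_k, and E = C_xx − (1/n)XᵀX. Then ‖Π_k^⊥ C_xx Π_k^⊥‖_op ≤ ‖E‖_op + λ̃_{k+1} ≤ 2‖E‖_op + λ_{k+1}, where λ̃_{k+1} is the (k+1)-th largest eigenvalue of (1/n)XᵀX. -/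
/-! In the eigenbasis `ũ` of the sample covariance `S = (1/n) XᵀX` the projection `Π_k^⊥` is the
diagonal indicator of the trailing indices, so from `C_xx = E + S` we get
`‖Π_k^⊥ C_xx Π_k^⊥‖ ≤ ‖E‖ + ‖Π_k^⊥ S Π_k^⊥‖ = ‖E‖ + λ̃_{k+1}`, the eigenvalues of `S` being
nonnegative and sorted. For Weyl's bound `λ̃_{k+1} ≤ λ_{k+1} + ‖E‖`, take a nonzero `v` in the span
of `ũ_1, …, ũ_{k+1}` orthogonal to `u_1, …, u_k` (`p - 1` linear conditions on `p` unknowns): then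
`λ̃_{k+1} |v|² ≤ vᵀ S v` and `vᵀ C_xx v ≤ λ_{k+1} |v|²`, while the two quadratic forms differ by at
most `‖E‖ |v|²`. -/

open Matrix
open scoped BigOperators Matrix.Norms.L2Operator

namespace Matrix

variable {ι : Type*} [Fintype ι] [DecidableEq ι]

lemma sum_smul_vecMulVec_self_eq {R : Type*} [CommSemiring R] (U : Matrix ι ι R) (c : ι → R) :
    ∑ j, c j • vecMulVec (U j) (U j) = Uᵀ * diagonal c * U := by
  ext a b
  simp only [Matrix.sum_apply, Matrix.smul_apply, vecMulVec_apply, smul_eq_mul,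
    mul_apply (M := _ * diagonal c), mul_diagonal, transpose_apply]
  exact Finset.sum_congr rfl fun j _ => by ring

lemma mem_orthogonalGroup_iff_dotProduct {U : Matrix ι ι ℝ} :
    U ∈ orthogonalGroup ι ℝ ↔ ∀ i j, U i ⬝ᵥ U j = if i = j then 1 else 0 := by
  simp only [mem_orthogonalGroup_iff, ← ext_iff, mul_apply, transpose_apply, one_apply, dotProduct]

lemma abs_dotProduct_mulVec_le_l2_opNorm_mul (A : Matrix ι ι ℝ) (v : ι → ℝ) :
    |v ⬝ᵥ (A *ᵥ v)| ≤ ‖A‖ * (v ⬝ᵥ v) := by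
  set x : EuclideanSpace ℝ ι := WithLp.toLp 2 v
  have hx : ‖x‖ ^ 2 = v ⬝ᵥ v := by
    simp [x, EuclideanSpace.real_norm_sq_eq x, dotProduct, sq]
  set T := toEuclideanCLM (n := ι) (𝕜 := ℝ) A
  calc |v ⬝ᵥ (A *ᵥ v)| = |inner ℝ x (T x)| := by rw [inner_toEuclideanCLM]
    _ ≤ ‖x‖ * ‖T x‖ := abs_real_inner_le_norm _ _
    _ ≤ ‖x‖ * (‖A‖ * ‖x‖) := by gcongr; exact T.le_opNorm x
    _ = ‖A‖ * (v ⬝ᵥ v) := by rw [← hx]; ring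

lemma dotProduct_transpose_mul_diagonal_mul_mulVec (U : Matrix ι ι ℝ) (c : ι → ℝ) (v : ι → ℝ) :
    v ⬝ᵥ ((Uᵀ * diagonal c * U) *ᵥ v) = ∑ j, c j * (U *ᵥ v) j ^ 2 := by
  rw [← mulVec_mulVec, ← mulVec_mulVec, dotProduct_mulVec, vecMul_transpose]
  simp only [dotProduct, mulVec_diagonal]
  exact Finset.sum_congr rfl fun j _ => by ring

lemma exists_ne_zero_mulVec_eq_zero_of_lt_of_gt {K : Type*} [Field K] [LinearOrder ι]
    (A B : Matrix ι ι K) (k : ι) :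
    ∃ v ≠ 0, (∀ j < k, (A *ᵥ v) j = 0) ∧ ∀ j, k < j → (B *ᵥ v) j = 0 := by
  set M : Matrix ι ι K := of fun j => if j < k then A j else if k < j then B j else 0
  have hM : M.det = 0 := det_eq_zero_of_row_eq_zero k fun _ => by simp [M]
  obtain ⟨v, hv, hMv⟩ := exists_mulVec_eq_zero_iff.mpr hM
  refine ⟨v, hv, fun j hj => ?_, fun j hj => ?_⟩
  · simpa [M, mulVec, hj] using congrFun hMv j
  · simpa [M, mulVec, hj, hj.not_gt] using congrFun hMv j

section Orthogonal

variable {U : Matrix ι ι ℝ}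

lemma l2_opNorm_transpose_mul_mul (hU : U ∈ orthogonalGroup ι ℝ) (A : Matrix ι ι ℝ) :
    ‖Uᵀ * A * U‖ = ‖A‖ := by
  have hUt : Uᵀ ∈ unitary (Matrix ι ι ℝ) := by
    simpa [star_eq_conjTranspose] using Unitary.star_mem hU
  rw [CStarRing.norm_mul_mem_unitary _ hU, CStarRing.norm_mem_unitary_mul _ hUt]

lemma l2_opNorm_transpose_mul_diagonal_mul_le (hU : U ∈ orthogonalGroup ι ℝ) {c : ι → ℝ}
    {m : ℝ} (hm : 0 ≤ m) (hc : ∀ j, |c j| ≤ m) : ‖Uᵀ * diagonal c * U‖ ≤ m := by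
  rw [l2_opNorm_transpose_mul_mul hU, l2_opNorm_diagonal, pi_norm_le_iff_of_nonneg hm]
  exact hc

lemma transpose_mul_diagonal_mul_mul_transpose_mul_diagonal_mul (hU : U ∈ orthogonalGroup ι ℝ)
    (a b : ι → ℝ) :
    Uᵀ * diagonal a * U * (Uᵀ * diagonal b * U) = Uᵀ * diagonal (a * b) * U := by
  have hUUt : U * Uᵀ = 1 := (mem_orthogonalGroup_iff ι ℝ).mp hU
  simp only [Matrix.mul_assoc]
  rw [← Matrix.mul_assoc U, hUUt, Matrix.one_mul, ← Matrix.mul_assoc (diagonal a),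
    diagonal_mul_diagonal]
  rfl

lemma one_sub_sum_vecMulVec_eq (hU : U ∈ orthogonalGroup ι ℝ) (s : Finset ι) :
    1 - ∑ i ∈ s, vecMulVec (U i) (U i)
      = Uᵀ * diagonal (fun j => if j ∈ s then 0 else 1) * U := by
  have hone : (1 : Matrix ι ι ℝ) = Uᵀ * diagonal (fun _ => 1) * U := by
    rw [diagonal_one, Matrix.mul_one, (mem_orthogonalGroup_iff' ι ℝ).mp hU]
  have hsum : ∑ i ∈ s, vecMulVec (U i) (U i)
      = Uᵀ * diagonal (fun j => if j ∈ s then 1 else 0) * U := by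
    rw [← sum_smul_vecMulVec_self_eq U]
    simp [ite_smul, Finset.sum_ite_mem]
  rw [hone, hsum, ← Matrix.sub_mul, ← Matrix.mul_sub, diagonal_sub]
  congr 3
  ext j
  split_ifs <;> simp

lemma dotProduct_mulVec_self_eq (hU : U ∈ orthogonalGroup ι ℝ) (v : ι → ℝ) :
    (U *ᵥ v) ⬝ᵥ (U *ᵥ v) = v ⬝ᵥ v := by
  rw [dotProduct_mulVec, ← vecMul_transpose, vecMul_vecMul, (mem_orthogonalGroup_iff' ι ℝ).mp hU,
    vecMul_one]

lemma nonneg_of_posSemidef_transpose_mul_diagonal_mul (hU : U ∈ orthogonalGroup ι ℝ)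
    {c : ι → ℝ} (hc : (Uᵀ * diagonal c * U).PosSemidef) (j : ι) : 0 ≤ c j := by
  have hUUt : U * Uᵀ = 1 := (mem_orthogonalGroup_iff ι ℝ).mp hU
  have hdiag : U * (Uᵀ * diagonal c * U) * Uᵀ = diagonal c := by
    simp only [Matrix.mul_assoc, hUUt, Matrix.mul_one]
    rw [← Matrix.mul_assoc, hUUt, Matrix.one_mul]
  simpa [hdiag] using (hc.mul_mul_conjTranspose_same U).diag_nonneg (i := j)

theorem l2_opNorm_compression_le (hU : U ∈ orthogonalGroup ι ℝ) {s : Finset ι} {b : ι → ℝ}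
    {m : ℝ} (hm : 0 ≤ m) (hb : ∀ j ∉ s, |b j| ≤ m) (E : Matrix ι ι ℝ) :
    ‖(1 - ∑ i ∈ s, vecMulVec (U i) (U i)) * (E + Uᵀ * diagonal b * U) *
      (1 - ∑ i ∈ s, vecMulVec (U i) (U i))‖ ≤ ‖E‖ + m := by
  rw [one_sub_sum_vecMulVec_eq hU, Matrix.mul_add, Matrix.add_mul]
  set P := Uᵀ * diagonal (fun j => if j ∈ s then 0 else 1) * U
  have hP : ‖P‖ ≤ 1 :=
    l2_opNorm_transpose_mul_diagonal_mul_le hU zero_le_one fun j => by split_ifs <;> simp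
  have hPEP : ‖P * E * P‖ ≤ ‖E‖ :=
    calc ‖P * E * P‖ ≤ ‖P‖ * ‖E‖ * ‖P‖ := norm_mul₃_le
      _ ≤ 1 * ‖E‖ * 1 := by gcongr
      _ = ‖E‖ := by ring
  have hPBP : ‖P * (Uᵀ * diagonal b * U) * P‖ ≤ m := by
    rw [transpose_mul_diagonal_mul_mul_transpose_mul_diagonal_mul hU,
      transpose_mul_diagonal_mul_mul_transpose_mul_diagonal_mul hU]
    refine l2_opNorm_transpose_mul_diagonal_mul_le hU hm fun j => ?_
    by_cases hj : j ∈ s <;> simp [hj, hm, hb]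
  exact (norm_add_le _ _).trans (add_le_add hPEP hPBP)

variable [LinearOrder ι] {c : ι → ℝ} {k : ι} {v : ι → ℝ}

lemma dotProduct_transpose_mul_diagonal_mul_mulVec_le (hU : U ∈ orthogonalGroup ι ℝ)
    (hc : Antitone c) (hv : ∀ j < k, (U *ᵥ v) j = 0) :
    v ⬝ᵥ ((Uᵀ * diagonal c * U) *ᵥ v) ≤ c k * (v ⬝ᵥ v) := by
  rw [dotProduct_transpose_mul_diagonal_mul_mulVec, ← dotProduct_mulVec_self_eq hU,
    dotProduct, Finset.mul_sum]
  refine Finset.sum_le_sum fun j _ => ?_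
  rcases lt_or_ge j k with hj | hj
  · simp [hv j hj]
  · rw [sq]
    exact mul_le_mul_of_nonneg_right (hc hj) (mul_self_nonneg _)

lemma le_dotProduct_transpose_mul_diagonal_mul_mulVec (hU : U ∈ orthogonalGroup ι ℝ)
    (hc : Antitone c) (hv : ∀ j, k < j → (U *ᵥ v) j = 0) :
    c k * (v ⬝ᵥ v) ≤ v ⬝ᵥ ((Uᵀ * diagonal c * U) *ᵥ v) := by
  rw [dotProduct_transpose_mul_diagonal_mul_mulVec, ← dotProduct_mulVec_self_eq hU,
    dotProduct, Finset.mul_sum]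
  refine Finset.sum_le_sum fun j _ => ?_
  rcases lt_or_ge k j with hj | hj
  · simp [hv j hj]
  · rw [sq]
    exact mul_le_mul_of_nonneg_right (hc hj) (mul_self_nonneg _)

theorem le_add_l2_opNorm_sub_of_antitone {V : Matrix ι ι ℝ} (hU : U ∈ orthogonalGroup ι ℝ)
    (hV : V ∈ orthogonalGroup ι ℝ) {a b : ι → ℝ} (ha : Antitone a) (hb : Antitone b) (k : ι) :
    b k ≤ a k + ‖Uᵀ * diagonal a * U - Vᵀ * diagonal b * V‖ := by
  obtain ⟨v, hv0, hUv, hVv⟩ := exists_ne_zero_mulVec_eq_zero_of_lt_of_gt U V k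
  set A := Uᵀ * diagonal a * U
  set B := Vᵀ * diagonal b * V
  have hvv : 0 < v ⬝ᵥ v :=
    (Finset.sum_nonneg fun i _ => mul_self_nonneg (v i)).lt_of_ne'
      (dotProduct_self_eq_zero.not.mpr hv0)
  have hA : v ⬝ᵥ (A *ᵥ v) ≤ a k * (v ⬝ᵥ v) :=
    dotProduct_transpose_mul_diagonal_mul_mulVec_le hU ha hUv
  have hB : b k * (v ⬝ᵥ v) ≤ v ⬝ᵥ (B *ᵥ v) :=
    le_dotProduct_transpose_mul_diagonal_mul_mulVec hV hb hVv
  have hAB : v ⬝ᵥ (B *ᵥ v) - v ⬝ᵥ (A *ᵥ v) ≤ ‖A - B‖ * (v ⬝ᵥ v) := by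
    rw [← neg_sub, ← dotProduct_sub, ← sub_mulVec]
    exact (neg_le_abs _).trans (abs_dotProduct_mulVec_le_l2_opNorm_mul (A - B) v)
  refine le_of_mul_le_mul_right ?_ hvv
  rw [add_mul]
  linarith

end Orthogonal

end Matrix

theorem pca_projected_cov_opNorm_bound_general
    (n p k : ℕ) (hk : k < min n p)
    (X : Matrix (Fin n) (Fin p) ℝ)
    (Cxx : Matrix (Fin p) (Fin p) ℝ)
    -- eigendecomposition of the population covariance, eigenvalues sorted decreasingly
    (lam : Fin p → ℝ) (u : Fin p → Fin p → ℝ)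
    (hlam_anti : ∀ i j : Fin p, i ≤ j → lam j ≤ lam i)
    (hu_orth : ∀ i j, u i ⬝ᵥ u j = if i = j then (1 : ℝ) else 0)
    (hCxx : Cxx = ∑ j, lam j • vecMulVec (u j) (u j))
    -- eigendecomposition of the empirical covariance (1/n) XᵀX
    (lamt : Fin p → ℝ) (ut : Fin p → Fin p → ℝ)
    (hlamt_anti : ∀ i j : Fin p, i ≤ j → lamt j ≤ lamt i)
    (hut_orth : ∀ i j, ut i ⬝ᵥ ut j = if i = j then (1 : ℝ) else 0)
    (hemp : (1 / (n : ℝ)) • (Xᵀ * X) = ∑ j, lamt j • vecMulVec (ut j) (ut j))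
    -- the projections and the perturbation
    (Pik PikPerp E : Matrix (Fin p) (Fin p) ℝ)
    (hPik : Pik = ∑ i ∈ Finset.univ.filter (fun i : Fin p => (i : ℕ) < k),
        vecMulVec (ut i) (ut i))
    (hPerp : PikPerp = 1 - Pik)
    (hE : E = Cxx - (1 / (n : ℝ)) • (Xᵀ * X)) :
    ‖PikPerp * Cxx * PikPerp‖ ≤ ‖E‖ + lamt ⟨k, Nat.lt_of_lt_of_le hk (Nat.min_le_right n p)⟩ ∧
      ‖E‖ + lamt ⟨k, Nat.lt_of_lt_of_le hk (Nat.min_le_right n p)⟩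
        ≤ 2 * ‖E‖ + lam ⟨k, Nat.lt_of_lt_of_le hk (Nat.min_le_right n p)⟩ := by
  set K : Fin p := ⟨k, Nat.lt_of_lt_of_le hk (Nat.min_le_right n p)⟩
  have hU : of u ∈ orthogonalGroup (Fin p) ℝ := mem_orthogonalGroup_iff_dotProduct.mpr hu_orth
  have hUt : of ut ∈ orthogonalGroup (Fin p) ℝ := mem_orthogonalGroup_iff_dotProduct.mpr hut_orth
  have hCxx' : Cxx = (of u)ᵀ * diagonal lam * of u :=
    hCxx.trans (sum_smul_vecMulVec_self_eq _ _)
  have hemp' : (1 / (n : ℝ)) • (Xᵀ * X) = (of ut)ᵀ * diagonal lamt * of ut :=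
    hemp.trans (sum_smul_vecMulVec_self_eq _ _)
  have hlamt_nonneg : ∀ j, 0 ≤ lamt j := by
    refine nonneg_of_posSemidef_transpose_mul_diagonal_mul hUt ?_
    rw [← hemp']
    exact (posSemidef_conjTranspose_mul_self X).smul (by positivity)
  refine ⟨?_, ?_⟩
  · rw [hPerp, hPik, show Cxx = E + (1 / (n : ℝ)) • (Xᵀ * X) by rw [hE]; abel, hemp']
    refine l2_opNorm_compression_le hUt (hlamt_nonneg K) (fun j hj => ?_) E
    have hKj : K ≤ j := by simpa [Fin.le_def, K] using hj
    rw [abs_of_nonneg (hlamt_nonneg j)]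
    exact hlamt_anti K j hKj
  · have hweyl := le_add_l2_opNorm_sub_of_antitone hU hUt hlam_anti hlamt_anti K
    rw [← hCxx', ← hemp', ← hE] at hweyl
    linarith

theorem pca_projected_cov_opNorm_bound
    (n p k : ℕ) (hn : 0 < n) (hk : k < min n p)
    (X : Matrix (Fin n) (Fin p) ℝ)
    (Cxx : Matrix (Fin p) (Fin p) ℝ)
    -- eigendecomposition of the population covariance, eigenvalues sorted decreasingly
    (lam : Fin p → ℝ) (u : Fin p → Fin p → ℝ)
    (hlam_anti : ∀ i j : Fin p, i ≤ j → lam j ≤ lam i)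
    (hlam_nonneg : ∀ j, 0 ≤ lam j)
    (hu_orth : ∀ i j, u i ⬝ᵥ u j = if i = j then (1 : ℝ) else 0)
    (hCxx : Cxx = ∑ j, lam j • vecMulVec (u j) (u j))
    -- eigendecomposition of the empirical covariance (1/n) XᵀX
    (lamt : Fin p → ℝ) (ut : Fin p → Fin p → ℝ)
    (hlamt_anti : ∀ i j : Fin p, i ≤ j → lamt j ≤ lamt i)
    (hut_orth : ∀ i j, ut i ⬝ᵥ ut j = if i = j then (1 : ℝ) else 0)
    (hemp : (1 / (n : ℝ)) • (Xᵀ * X) = ∑ j, lamt j • vecMulVec (ut j) (ut j))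
    -- the projections and the perturbation
    (Pik PikPerp E : Matrix (Fin p) (Fin p) ℝ)
    (hPik : Pik = ∑ i ∈ Finset.univ.filter (fun i : Fin p => (i : ℕ) < k),
        vecMulVec (ut i) (ut i))
    (hPerp : PikPerp = 1 - Pik)
    (hE : E = Cxx - (1 / (n : ℝ)) • (Xᵀ * X)) :
    ‖PikPerp * Cxx * PikPerp‖ ≤ ‖E‖ + lamt ⟨k, Nat.lt_of_lt_of_le hk (Nat.min_le_right n p)⟩ ∧
      ‖E‖ + lamt ⟨k, Nat.lt_of_lt_of_le hk (Nat.min_le_right n p)⟩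
        ≤ 2 * ‖E‖ + lam ⟨k, Nat.lt_of_lt_of_le hk (Nat.min_le_right n p)⟩ :=
  pca_projected_cov_opNorm_bound_general n p k hk X Cxx lam u hlam_anti hu_orth hCxx lamt ut
    hlamt_anti hut_orth hemp Pik PikPerp E hPik hPerp hE
end

section
/- Let X ∈ ℝ^{n×p}, β ∈ ℝ^p, and let C_xx ∈ ℝ^{p×p} be symmetric positive semidefinite with eigenvalues λ₁ ≥ … ≥ λ_p ≥ 0. Let k < min(n,p), let Π_k^⊥ = I_p − Σ_{i=1}^k ũᵢũᵢᵀ where ũᵢ are orthonormal eigenvectors of (1/n)XᵀX for its k largest eigenvalues, and let E = C_xx − (1/n)XᵀX. Then the PCA-OLS squared bias satisfies B := βᵀ Π_k^⊥ C_xx Π_k^⊥ β ≤ ‖β‖² (2‖E‖_op + λ_{k+1}). -/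
/-!
Write `w = Π_k^⊥ β` and `S = (1/n) XᵀX`, so that `B = wᵀ C_xx w = wᵀ S w + wᵀ E w`. Since `w` has no
component along the top `k` empirical eigenvectors, `wᵀ S w ≤ λ̃_{k+1} ‖w‖²`, while
`wᵀ E w ≤ ‖E‖_op ‖w‖²` and `‖w‖ ≤ ‖β‖`. Weyl's inequality `λ̃_{k+1} ≤ λ_{k+1} + ‖E‖_op` closes the
argument; it follows from Courant–Fischer applied to a nonzero vector in the span of the top `k + 1`
empirical eigenvectors that is orthogonal to the top `k` population eigenvectors, which exists by
counting dimensions.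
-/

open Matrix
open scoped BigOperators Matrix.Norms.L2Operator

lemma dotProduct_sum_smul_vecMulVec_mulVec {m : Type*} [Fintype m] (μ : m → ℝ)
    (v : m → m → ℝ) (x : m → ℝ) :
    x ⬝ᵥ (∑ j, μ j • vecMulVec (v j) (v j)) *ᵥ x = ∑ j, μ j * (v j ⬝ᵥ x) ^ 2 := by
  simp only [sum_mulVec, smul_mulVec, vecMulVec_mulVec, dotProduct_sum, dotProduct_smul,
    dotProduct_comm x (v _)]
  simp [sq]

lemma transpose_one_sub_sum_vecMulVec_self {m ι : Type*} [DecidableEq m] (s : Finset ι)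
    (v : ι → m → ℝ) :
    (1 - ∑ i ∈ s, vecMulVec (v i) (v i))ᵀ = 1 - ∑ i ∈ s, vecMulVec (v i) (v i) := by
  simp [transpose_sum]

lemma dotProduct_mul_mul_mulVec_of_transpose_eq {m : Type*} [Fintype m] {P : Matrix m m ℝ}
    (hP : Pᵀ = P) (C : Matrix m m ℝ) (x : m → ℝ) :
    x ⬝ᵥ (P * C * P) *ᵥ x = (P *ᵥ x) ⬝ᵥ C *ᵥ (P *ᵥ x) := by
  have hxP : x ᵥ* P = P *ᵥ x := by simpa [hP] using vecMul_transpose P x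
  rw [← mulVec_mulVec, ← mulVec_mulVec, dotProduct_mulVec, hxP]

lemma exists_ne_zero_forall_dotProduct_eq_zero {K ι m : Type*} [Field K] [Fintype m]
    (f : ι → m → K) (s : Finset ι) (hs : s.card < Fintype.card m) :
    ∃ x ≠ 0, ∀ i ∈ s, f i ⬝ᵥ x = 0 := by
  let F : Matrix s m K := of fun i => f i
  have hker : LinearMap.ker F.mulVecLin ≠ ⊥ :=
    LinearMap.ker_ne_bot_of_finrank_lt (by simpa using hs)
  obtain ⟨x, hx, hx0⟩ := (Submodule.ne_bot_iff _).mp hker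
  exact ⟨x, hx0, fun i hi => congrFun hx ⟨i, hi⟩⟩

section Orthonormal

variable {m : Type*} [Fintype m] [DecidableEq m]

lemma abs_dotProduct_mulVec_le (E : Matrix m m ℝ) (x : m → ℝ) :
    |x ⬝ᵥ E *ᵥ x| ≤ ‖E‖ * (x ⬝ᵥ x) := by
  have hx : x ⬝ᵥ x = ‖WithLp.toLp 2 x‖ ^ 2 := by
    rw [← real_inner_self_eq_norm_sq, EuclideanSpace.inner_toLp_toLp]
    simp
  calc |x ⬝ᵥ E *ᵥ x| = |inner ℝ (WithLp.toLp 2 (E *ᵥ x)) (WithLp.toLp 2 x)| := by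
        rw [EuclideanSpace.inner_toLp_toLp]
        simp
    _ ≤ ‖WithLp.toLp 2 (E *ᵥ x)‖ * ‖WithLp.toLp 2 x‖ := abs_real_inner_le_norm _ _
    _ ≤ ‖E‖ * ‖WithLp.toLp 2 x‖ * ‖WithLp.toLp 2 x‖ := by
        gcongr
        exact E.l2_opNorm_mulVec (WithLp.toLp 2 x)
    _ = ‖E‖ * (x ⬝ᵥ x) := by rw [hx]; ring

variable {v : m → m → ℝ} (hv : ∀ i j, v i ⬝ᵥ v j = if i = j then (1 : ℝ) else 0)
include hv

/-- Parseval: an orthonormal family of `card m` vectors in `m → ℝ` is complete. -/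
lemma sum_sq_dotProduct_eq_dotProduct_self (x : m → ℝ) : ∑ j, (v j ⬝ᵥ x) ^ 2 = x ⬝ᵥ x := by
  set V : Matrix m m ℝ := of v
  have hVVt : V * Vᵀ = 1 := by
    ext i j
    simp [V, mul_apply, one_apply, ← hv, dotProduct]
  have hVtV : Vᵀ * V = 1 := mul_eq_one_comm.mp hVVt
  calc ∑ j, (v j ⬝ᵥ x) ^ 2 = (V *ᵥ x) ⬝ᵥ (V *ᵥ x) := by simp [V, dotProduct, mulVec, sq]
    _ = x ⬝ᵥ x := by
      rw [dotProduct_mulVec, ← mulVec_transpose, mulVec_mulVec, hVtV, one_mulVec]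

lemma dotProduct_sum_smul_vecMulVec_mulVec_le {μ : m → ℝ} {x : m → ℝ} {c : ℝ}
    (hμ : ∀ j, v j ⬝ᵥ x ≠ 0 → μ j ≤ c) :
    x ⬝ᵥ (∑ j, μ j • vecMulVec (v j) (v j)) *ᵥ x ≤ c * (x ⬝ᵥ x) := by
  rw [dotProduct_sum_smul_vecMulVec_mulVec, ← sum_sq_dotProduct_eq_dotProduct_self hv x,
    Finset.mul_sum]
  refine Finset.sum_le_sum fun j _ => ?_
  rcases eq_or_ne (v j ⬝ᵥ x) 0 with h | h
  · simp [h]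
  · exact mul_le_mul_of_nonneg_right (hμ j h) (sq_nonneg _)

lemma le_dotProduct_sum_smul_vecMulVec_mulVec {μ : m → ℝ} {x : m → ℝ} {c : ℝ}
    (hμ : ∀ j, v j ⬝ᵥ x ≠ 0 → c ≤ μ j) :
    c * (x ⬝ᵥ x) ≤ x ⬝ᵥ (∑ j, μ j • vecMulVec (v j) (v j)) *ᵥ x := by
  rw [dotProduct_sum_smul_vecMulVec_mulVec, ← sum_sq_dotProduct_eq_dotProduct_self hv x,
    Finset.mul_sum]
  refine Finset.sum_le_sum fun j _ => ?_
  rcases eq_or_ne (v j ⬝ᵥ x) 0 with h | h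
  · simp [h]
  · exact mul_le_mul_of_nonneg_right (hμ j h) (sq_nonneg _)

lemma dotProduct_one_sub_sum_vecMulVec_mulVec (s : Finset m) (x : m → ℝ) (j : m) :
    v j ⬝ᵥ (1 - ∑ i ∈ s, vecMulVec (v i) (v i)) *ᵥ x = if j ∈ s then 0 else v j ⬝ᵥ x := by
  simp only [sub_mulVec, one_mulVec, sum_mulVec, vecMulVec_mulVec, dotProduct_sub,
    dotProduct_sum, dotProduct_smul, hv, op_smul_eq_smul, smul_eq_mul, mul_ite, mul_one,
    mul_zero, Finset.sum_ite_eq]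
  split_ifs <;> ring

lemma dotProduct_one_sub_sum_vecMulVec_mulVec_self_le (s : Finset m) (x : m → ℝ) :
    ((1 - ∑ i ∈ s, vecMulVec (v i) (v i)) *ᵥ x) ⬝ᵥ ((1 - ∑ i ∈ s, vecMulVec (v i) (v i)) *ᵥ x)
      ≤ x ⬝ᵥ x := by
  rw [← sum_sq_dotProduct_eq_dotProduct_self hv (_ *ᵥ x),
    ← sum_sq_dotProduct_eq_dotProduct_self hv x]
  refine Finset.sum_le_sum fun j _ => ?_
  rw [dotProduct_one_sub_sum_vecMulVec_mulVec hv]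
  split_ifs <;> simp [sq_nonneg]

end Orthonormal

theorem weyl_eigenvalue_le_add_norm_sub {m : Type*} [Fintype m] [LinearOrder m]
    {lam lamt : m → ℝ} {u ut : m → m → ℝ} (hlam : Antitone lam) (hlamt : Antitone lamt)
    (hu : ∀ i j, u i ⬝ᵥ u j = if i = j then (1 : ℝ) else 0)
    (hut : ∀ i j, ut i ⬝ᵥ ut j = if i = j then (1 : ℝ) else 0) (i : m) :
    lamt i ≤ lam i + ‖(∑ j, lam j • vecMulVec (u j) (u j)) -
      ∑ j, lamt j • vecMulVec (ut j) (ut j)‖ := by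
  set C := ∑ j, lam j • vecMulVec (u j) (u j)
  set S := ∑ j, lamt j • vecMulVec (ut j) (ut j)
  have hcard : (Finset.univ.erase i).card < Fintype.card m := by
    rw [Finset.card_erase_of_mem (Finset.mem_univ i), Finset.card_univ]
    exact Nat.sub_lt (Fintype.card_pos_iff.mpr ⟨i⟩) one_pos
  obtain ⟨x, hx0, hx⟩ := exists_ne_zero_forall_dotProduct_eq_zero
    (fun j => if j < i then u j else ut j) _ hcard
  have hCx : x ⬝ᵥ C *ᵥ x ≤ lam i * (x ⬝ᵥ x) := by
    refine dotProduct_sum_smul_vecMulVec_mulVec_le hu fun j hj => hlam (not_lt.mp fun hji => ?_)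
    exact hj (by simpa [hji] using hx j (Finset.mem_erase.mpr ⟨hji.ne, Finset.mem_univ j⟩))
  have hSx : lamt i * (x ⬝ᵥ x) ≤ x ⬝ᵥ S *ᵥ x := by
    refine le_dotProduct_sum_smul_vecMulVec_mulVec hut fun j hj => hlamt (not_lt.mp fun hij => ?_)
    exact hj (by simpa [hij.not_gt] using hx j (Finset.mem_erase.mpr ⟨hij.ne', Finset.mem_univ j⟩))
  have hEx : -(‖C - S‖ * (x ⬝ᵥ x)) ≤ x ⬝ᵥ C *ᵥ x - x ⬝ᵥ S *ᵥ x := by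
    rw [← dotProduct_sub, ← sub_mulVec]
    exact neg_le_of_abs_le (abs_dotProduct_mulVec_le _ x)
  have hxx : 0 < x ⬝ᵥ x := by
    simpa using dotProduct_self_star_pos_iff.mpr hx0
  nlinarith

theorem pca_ols_bias_upper_bound_general
    (n p k : ℕ) (hk : k < min n p)
    (X : Matrix (Fin n) (Fin p) ℝ) (β : Fin p → ℝ)
    (Cxx : Matrix (Fin p) (Fin p) ℝ)
    -- eigendecomposition of the population covariance, eigenvalues sorted decreasingly
    (lam : Fin p → ℝ) (u : Fin p → Fin p → ℝ)
    (hlam_anti : ∀ i j : Fin p, i ≤ j → lam j ≤ lam i)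
    (hlam_nonneg : ∀ j, 0 ≤ lam j)
    (hu_orth : ∀ i j, u i ⬝ᵥ u j = if i = j then (1 : ℝ) else 0)
    (hCxx : Cxx = ∑ j, lam j • vecMulVec (u j) (u j))
    -- eigendecomposition of the empirical covariance (1/n) XᵀX
    (lamt : Fin p → ℝ) (ut : Fin p → Fin p → ℝ)
    (hlamt_anti : ∀ i j : Fin p, i ≤ j → lamt j ≤ lamt i)
    (hut_orth : ∀ i j, ut i ⬝ᵥ ut j = if i = j then (1 : ℝ) else 0)
    (hemp : (1 / (n : ℝ)) • (Xᵀ * X) = ∑ j, lamt j • vecMulVec (ut j) (ut j))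
    -- projection onto the orthogonal complement of the top-k empirical eigenspace
    (PikPerp E : Matrix (Fin p) (Fin p) ℝ)
    (hPerp : PikPerp = 1 - ∑ i ∈ Finset.univ.filter (fun i : Fin p => (i : ℕ) < k),
        vecMulVec (ut i) (ut i))
    (hE : E = Cxx - (1 / (n : ℝ)) • (Xᵀ * X)) :
    β ⬝ᵥ ((PikPerp * Cxx * PikPerp) *ᵥ β)
      ≤ (∑ i, β i ^ 2) *
        (2 * ‖E‖ + lam ⟨k, Nat.lt_of_lt_of_le hk (Nat.min_le_right n p)⟩) := by
  subst hPerp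
  set kk : Fin p := ⟨k, Nat.lt_of_lt_of_le hk (Nat.min_le_right n p)⟩
  set S := (1 / (n : ℝ)) • (Xᵀ * X)
  set s := Finset.univ.filter (fun i : Fin p => (i : ℕ) < k)
  set w := (1 - ∑ i ∈ s, vecMulVec (ut i) (ut i)) *ᵥ β with hw
  have hww : w ⬝ᵥ w ≤ β ⬝ᵥ β := dotProduct_one_sub_sum_vecMulVec_mulVec_self_le hut_orth s β
  have hww_nonneg : 0 ≤ w ⬝ᵥ w := by simpa using dotProduct_star_self_nonneg w
  have hwSw : w ⬝ᵥ S *ᵥ w ≤ lamt kk * (w ⬝ᵥ w) := by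
    rw [hemp]
    refine dotProduct_sum_smul_vecMulVec_mulVec_le hut_orth fun j hj => hlamt_anti _ _ ?_
    rw [hw, dotProduct_one_sub_sum_vecMulVec_mulVec hut_orth] at hj
    by_contra hjk
    exact hj (if_pos (Finset.mem_filter.mpr ⟨Finset.mem_univ j, Fin.lt_def.mp (not_le.mp hjk)⟩))
  have hwEw : w ⬝ᵥ E *ᵥ w ≤ ‖E‖ * (w ⬝ᵥ w) := (le_abs_self _).trans (abs_dotProduct_mulVec_le E w)
  have hWeyl : lamt kk ≤ lam kk + ‖E‖ := by
    rw [hE, hemp, hCxx]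
    exact weyl_eigenvalue_le_add_norm_sub hlam_anti hlamt_anti hu_orth hut_orth kk
  have hββ : β ⬝ᵥ β = ∑ i, β i ^ 2 := by simp [dotProduct, sq]
  calc _ = w ⬝ᵥ Cxx *ᵥ w :=
        dotProduct_mul_mul_mulVec_of_transpose_eq (transpose_one_sub_sum_vecMulVec_self s ut) _ _
    _ = w ⬝ᵥ S *ᵥ w + w ⬝ᵥ E *ᵥ w := by
        rw [hE, ← dotProduct_add, ← add_mulVec, add_sub_cancel]
    _ ≤ (2 * ‖E‖ + lam kk) * (w ⬝ᵥ w) := by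
        nlinarith [mul_le_mul_of_nonneg_right hWeyl hww_nonneg, norm_nonneg E]
    _ ≤ (∑ i, β i ^ 2) * (2 * ‖E‖ + lam kk) := by
        rw [← hββ, mul_comm]
        exact mul_le_mul_of_nonneg_right hww (by linarith [norm_nonneg E, hlam_nonneg kk])

theorem pca_ols_bias_upper_bound
    (n p k : ℕ) (hn : 0 < n) (hk : k < min n p)
    (X : Matrix (Fin n) (Fin p) ℝ) (β : Fin p → ℝ)
    (Cxx : Matrix (Fin p) (Fin p) ℝ)
    -- eigendecomposition of the population covariance, eigenvalues sorted decreasingly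
    (lam : Fin p → ℝ) (u : Fin p → Fin p → ℝ)
    (hlam_anti : ∀ i j : Fin p, i ≤ j → lam j ≤ lam i)
    (hlam_nonneg : ∀ j, 0 ≤ lam j)
    (hu_orth : ∀ i j, u i ⬝ᵥ u j = if i = j then (1 : ℝ) else 0)
    (hCxx : Cxx = ∑ j, lam j • vecMulVec (u j) (u j))
    -- eigendecomposition of the empirical covariance (1/n) XᵀX
    (lamt : Fin p → ℝ) (ut : Fin p → Fin p → ℝ)
    (hlamt_anti : ∀ i j : Fin p, i ≤ j → lamt j ≤ lamt i)
    (hut_orth : ∀ i j, ut i ⬝ᵥ ut j = if i = j then (1 : ℝ) else 0)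
    (hemp : (1 / (n : ℝ)) • (Xᵀ * X) = ∑ j, lamt j • vecMulVec (ut j) (ut j))
    -- projection onto the orthogonal complement of the top-k empirical eigenspace
    (PikPerp E : Matrix (Fin p) (Fin p) ℝ)
    (hPerp : PikPerp = 1 - ∑ i ∈ Finset.univ.filter (fun i : Fin p => (i : ℕ) < k),
        vecMulVec (ut i) (ut i))
    (hE : E = Cxx - (1 / (n : ℝ)) • (Xᵀ * X)) :
    β ⬝ᵥ ((PikPerp * Cxx * PikPerp) *ᵥ β)
      ≤ (∑ i, β i ^ 2) *
        (2 * ‖E‖ + lam ⟨k, Nat.lt_of_lt_of_le hk (Nat.min_le_right n p)⟩) :=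
  pca_ols_bias_upper_bound_general n p k hk X β Cxx lam u hlam_anti hlam_nonneg hu_orth hCxx lamt ut
    hlamt_anti hut_orth hemp PikPerp E hPerp hE
end

section
/- Let X ∈ ℝ^{n×p} and let C_xx ∈ ℝ^{p×p} be symmetric positive semidefinite with eigenvalues λ₁ ≥ … ≥ λ_p ≥ 0. Let k < min(n,p), let X_{PCA,k} be the rank-k truncated SVD of X, and let E = C_xx − (1/n)XᵀX. If ‖E‖_op < λ_k, then tr(((1/n)X_{PCA,k}ᵀX_{PCA,k})^† C_xx) ≤ k λ₁ / (λ_k − ‖E‖_op); consequently the PCA-OLS variance V := (σ²/n)·tr(((1/n)X_{PCA,k}ᵀX_{PCA,k})^† C_xx) satisfies V ≤ (σ²/n)·kλ₁/(λ_k − ‖E‖_op). -/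
/-! Writing the truncated empirical covariance as `∑_{i<k} λ̃ᵢ ũᵢũᵢᵀ`, its pseudoinverse is
`∑_{i<k} λ̃ᵢ⁻¹ ũᵢũᵢᵀ` as soon as these `λ̃ᵢ` are nonzero, so the trace equals
`∑_{i<k} ũᵢᵀ C_xx ũᵢ / λ̃ᵢ`. Each numerator is a Rayleigh quotient of `C_xx`, hence at most `λ₁`,
and Weyl's inequality `λ̃ᵢ ≥ λ̃_k ≥ λ_k - ‖E‖ > 0` bounds each denominator from below.
Weyl's inequality is the Courant–Fischer argument: by counting dimensions some `v ≠ 0` is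
orthogonal to `ũ₁, …, ũ_{j-1}` and to `u_{j+1}, …, u_p`; its Rayleigh quotient is at least `λ_j`
for `C_xx`, at most `λ̃_j` for `(1/n) XᵀX`, and the two differ by at most `‖E‖`. -/

open Matrix
open scoped BigOperators Matrix.Norms.L2Operator

theorem IsMoorePenrose.unique_s3 {m n : Type*} [Fintype m] [Fintype n] {A : Matrix m n ℝ}
    {P Q : Matrix n m ℝ} (hP : IsMoorePenrose A P) (hQ : IsMoorePenrose A Q) : P = Q := by
  obtain ⟨hP₁, hP₂, hP₃, hP₄⟩ := hP
  obtain ⟨hQ₁, hQ₂, hQ₃, hQ₄⟩ := hQ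
  have hAP : A * P = A * Q :=
    calc A * P = (A * Q)ᵀ * (A * P)ᵀ := by rw [hQ₃, hP₃, ← Matrix.mul_assoc, hQ₁]
      _ = Qᵀ * (A * P * A)ᵀ := by simp only [transpose_mul, Matrix.mul_assoc]
      _ = A * Q := by rw [hP₁, ← transpose_mul, hQ₃]
  have hPA : P * A = Q * A :=
    calc P * A = (P * A)ᵀ * (Q * A)ᵀ := by
          rw [hP₄, hQ₄, Matrix.mul_assoc P, ← Matrix.mul_assoc A, hQ₁]
      _ = (A * P * A)ᵀ * Qᵀ := by simp only [transpose_mul, Matrix.mul_assoc]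
      _ = Q * A := by rw [hP₁, ← transpose_mul, hQ₄]
  calc P = P * A * P := hP₂.symm
    _ = Q * (A * Q) := by rw [hPA, Matrix.mul_assoc, hAP]
    _ = Q := by rw [← Matrix.mul_assoc, hQ₂]

namespace Matrix

theorem exists_ne_zero_forall_dotProduct_eq_zero {K n ι : Type*} [Field K] [Fintype n]
    [Fintype ι] (hcard : Fintype.card ι < Fintype.card n) (g : ι → n → K) :
    ∃ v : n → K, v ≠ 0 ∧ ∀ i, g i ⬝ᵥ v = 0 := by
  have hker : LinearMap.ker (Matrix.of g).mulVecLin ≠ ⊥ :=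
    LinearMap.ker_ne_bot_of_finrank_lt <| by
      simpa only [Module.finrank_fintype_fun_eq_card] using hcard
  obtain ⟨v, hv, hv0⟩ := (Submodule.ne_bot_iff _).mp hker
  exact ⟨v, hv0, fun i => congrFun hv i⟩

variable {n ι : Type*} [Fintype n]

theorem dotProduct_mulVec_le_l2_opNorm_mul [DecidableEq n] (A : Matrix n n ℝ) (v : n → ℝ) :
    v ⬝ᵥ (A *ᵥ v) ≤ ‖A‖ * (v ⬝ᵥ v) := by
  set x := (EuclideanSpace.equiv n ℝ).symm v
  have hinner : ∀ w, v ⬝ᵥ w = inner ℝ x ((EuclideanSpace.equiv n ℝ).symm w) := fun w => by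
    rw [EuclideanSpace.inner_eq_star_dotProduct, star_trivial, dotProduct_comm]; rfl
  have hnorm : ‖x‖ * ‖x‖ = v ⬝ᵥ v := by
    rw [← real_inner_self_eq_norm_mul_norm, hinner]
  calc v ⬝ᵥ (A *ᵥ v) ≤ ‖x‖ * ‖(EuclideanSpace.equiv n ℝ).symm (A *ᵥ v)‖ :=
        (hinner _).trans_le (real_inner_le_norm _ _)
    _ ≤ ‖x‖ * (‖A‖ * ‖x‖) := by gcongr; exact A.l2_opNorm_mulVec x
    _ = ‖A‖ * (v ⬝ᵥ v) := by rw [← hnorm]; ring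

theorem dotProduct_sum_smul_vecMulVec_mulVec (s : Finset ι) (c : ι → ℝ) (u : ι → n → ℝ)
    (v : n → ℝ) :
    v ⬝ᵥ ((∑ i ∈ s, c i • vecMulVec (u i) (u i)) *ᵥ v) = ∑ i ∈ s, c i * (u i ⬝ᵥ v) ^ 2 := by
  simp only [sum_mulVec, smul_mulVec, vecMulVec_mulVec, op_smul_eq_smul, dotProduct_sum,
    dotProduct_smul, smul_eq_mul]
  exact Finset.sum_congr rfl fun i _ => by rw [dotProduct_comm v, sq]

theorem trace_sum_smul_vecMulVec_mul (s : Finset ι) (c : ι → ℝ) (u : ι → n → ℝ)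
    (C : Matrix n n ℝ) :
    trace ((∑ i ∈ s, c i • vecMulVec (u i) (u i)) * C) = ∑ i ∈ s, c i * (u i ⬝ᵥ (C *ᵥ u i)) := by
  simp only [Finset.sum_mul, trace_sum, smul_mul, trace_smul, vecMulVec_mul, trace_vecMulVec,
    smul_eq_mul]
  refine Finset.sum_congr rfl fun i _ => ?_
  rw [dotProduct_comm, ← dotProduct_mulVec]

omit [Fintype n] in
theorem transpose_sum_smul_vecMulVec_self (s : Finset ι) (c : ι → ℝ) (u : ι → n → ℝ) :
    (∑ i ∈ s, c i • vecMulVec (u i) (u i))ᵀ = ∑ i ∈ s, c i • vecMulVec (u i) (u i) := by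
  simp only [transpose_sum, transpose_smul, transpose_vecMulVec]

section Orthonormal

variable [DecidableEq ι] {u : ι → n → ℝ}

theorem sum_smul_vecMulVec_mul_sum_smul_vecMulVec
    (hu : ∀ i j, u i ⬝ᵥ u j = if i = j then 1 else 0) (s t : Finset ι) (a b : ι → ℝ) :
    (∑ i ∈ s, a i • vecMulVec (u i) (u i)) * (∑ j ∈ t, b j • vecMulVec (u j) (u j))
      = ∑ i ∈ s ∩ t, (a i * b i) • vecMulVec (u i) (u i) := by
  simp only [Finset.sum_mul_sum, smul_mul_smul_comm, vecMulVec_mul_vecMulVec, vecMulVec_smul]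
  simp only [hu, ite_smul, one_smul, zero_smul, smul_ite, smul_zero, Finset.sum_ite_eq,
    Finset.sum_ite_mem]

theorem isMoorePenrose_sum_smul_vecMulVec
    (hu : ∀ i j, u i ⬝ᵥ u j = if i = j then 1 else 0) (s : Finset ι) {a : ι → ℝ}
    (ha : ∀ i ∈ s, a i ≠ 0) :
    IsMoorePenrose (∑ i ∈ s, a i • vecMulVec (u i) (u i))
      (∑ i ∈ s, (a i)⁻¹ • vecMulVec (u i) (u i)) := by
  simp only [IsMoorePenrose, sum_smul_vecMulVec_mul_sum_smul_vecMulVec hu, Finset.inter_self,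
    transpose_sum_smul_vecMulVec_self, and_true]
  constructor <;> refine Finset.sum_congr rfl fun i hi => ?_
  · rw [mul_inv_cancel₀ (ha i hi), one_mul]
  · rw [inv_mul_cancel₀ (ha i hi), one_mul]

end Orthonormal

section OrthonormalBasis

variable [DecidableEq n] {u : n → n → ℝ}

theorem sum_sq_dotProduct_eq_dotProduct_self
    (hu : ∀ i j, u i ⬝ᵥ u j = if i = j then 1 else 0) (v : n → ℝ) :
    ∑ i, (u i ⬝ᵥ v) ^ 2 = v ⬝ᵥ v := by
  have hUUt : of u * (of u)ᵀ = 1 := by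
    ext i j
    simpa [mul_apply, dotProduct, one_apply] using hu i j
  calc ∑ i, (u i ⬝ᵥ v) ^ 2 = (of u *ᵥ v) ⬝ᵥ (of u *ᵥ v) := by
        simp only [sq, dotProduct, mulVec, of_apply]
    _ = v ⬝ᵥ v := by
        rw [dotProduct_mulVec, vecMul_mulVec, mul_eq_one_comm.mp hUUt, vecMul_one]

theorem le_dotProduct_sum_smul_vecMulVec_mulVec
    (hu : ∀ i j, u i ⬝ᵥ u j = if i = j then 1 else 0) {a : n → ℝ} {t : ℝ} {v : n → ℝ}
    (h : ∀ i, u i ⬝ᵥ v ≠ 0 → t ≤ a i) :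
    t * (v ⬝ᵥ v) ≤ v ⬝ᵥ ((∑ i, a i • vecMulVec (u i) (u i)) *ᵥ v) := by
  rw [← sum_sq_dotProduct_eq_dotProduct_self hu v, dotProduct_sum_smul_vecMulVec_mulVec,
    Finset.mul_sum]
  refine Finset.sum_le_sum fun i _ => ?_
  by_cases h0 : u i ⬝ᵥ v = 0
  · simp [h0]
  · exact mul_le_mul_of_nonneg_right (h i h0) (sq_nonneg _)

theorem dotProduct_sum_smul_vecMulVec_mulVec_le
    (hu : ∀ i j, u i ⬝ᵥ u j = if i = j then 1 else 0) {a : n → ℝ} {t : ℝ} {v : n → ℝ}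
    (h : ∀ i, u i ⬝ᵥ v ≠ 0 → a i ≤ t) :
    v ⬝ᵥ ((∑ i, a i • vecMulVec (u i) (u i)) *ᵥ v) ≤ t * (v ⬝ᵥ v) := by
  rw [← sum_sq_dotProduct_eq_dotProduct_self hu v, dotProduct_sum_smul_vecMulVec_mulVec,
    Finset.mul_sum]
  refine Finset.sum_le_sum fun i _ => ?_
  by_cases h0 : u i ⬝ᵥ v = 0
  · simp [h0]
  · exact mul_le_mul_of_nonneg_right (h i h0) (sq_nonneg _)

end OrthonormalBasis

theorem sub_l2_opNorm_sub_le_of_antitone {p : ℕ} {a b : Fin p → ℝ} {u w : Fin p → Fin p → ℝ}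
    (hu : ∀ i j, u i ⬝ᵥ u j = if i = j then 1 else 0)
    (hw : ∀ i j, w i ⬝ᵥ w j = if i = j then 1 else 0) (ha : Antitone a) (hb : Antitone b)
    (j : Fin p) :
    a j - ‖(∑ i, a i • vecMulVec (u i) (u i)) - ∑ i, b i • vecMulVec (w i) (w i)‖ ≤ b j := by
  obtain ⟨v, hv0, hv⟩ := exists_ne_zero_forall_dotProduct_eq_zero (ι := {i : Fin p // i ≠ j})
    (by simpa [Fintype.card_subtype_compl] using j.pos) fun i => if i.1 < j then w i else u i
  have hw_v (i : Fin p) (hi : i < j) : w i ⬝ᵥ v = 0 := by simpa [hi] using hv ⟨i, hi.ne⟩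
  have hu_v (i : Fin p) (hi : j < i) : u i ⬝ᵥ v = 0 := by
    simpa [hi.not_gt] using hv ⟨i, hi.ne'⟩
  have hA := le_dotProduct_sum_smul_vecMulVec_mulVec hu (t := a j) (a := a) (v := v)
    fun i hi => ha (not_lt.mp (mt (hu_v i) hi))
  have hB := dotProduct_sum_smul_vecMulVec_mulVec_le hw (t := b j) (a := b) (v := v)
    fun i hi => hb (not_lt.mp (mt (hw_v i) hi))
  have hE := dotProduct_mulVec_le_l2_opNorm_mul
    ((∑ i, a i • vecMulVec (u i) (u i)) - ∑ i, b i • vecMulVec (w i) (w i)) v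
  have hvv : 0 < v ⬝ᵥ v :=
    (Finset.sum_nonneg fun i _ => mul_self_nonneg (v i)).lt_of_ne
      (Ne.symm (mt dotProduct_self_eq_zero.mp hv0))
  rw [sub_mulVec, dotProduct_sub] at hE
  refine le_of_mul_le_mul_right ?_ hvv
  linarith

end Matrix

theorem pca_ols_variance_upper_bound
    (n p k : ℕ) (hk : k < min n p)
    (X : Matrix (Fin n) (Fin p) ℝ)
    (Cxx : Matrix (Fin p) (Fin p) ℝ)
    (σ : ℝ)
    -- eigendecomposition of the population covariance, eigenvalues sorted decreasingly
    (lam : Fin p → ℝ) (u : Fin p → Fin p → ℝ)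
    (hlam_anti : ∀ i j : Fin p, i ≤ j → lam j ≤ lam i)
    (hlam_nonneg : ∀ j, 0 ≤ lam j)
    (hu_orth : ∀ i j, u i ⬝ᵥ u j = if i = j then (1 : ℝ) else 0)
    (hCxx : Cxx = ∑ j, lam j • vecMulVec (u j) (u j))
    -- eigendecomposition of the empirical covariance (1/n) XᵀX
    (lamt : Fin p → ℝ) (ut : Fin p → Fin p → ℝ)
    (hlamt_anti : ∀ i j : Fin p, i ≤ j → lamt j ≤ lamt i)
    (hut_orth : ∀ i j, ut i ⬝ᵥ ut j = if i = j then (1 : ℝ) else 0)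
    (hemp : (1 / (n : ℝ)) • (Xᵀ * X) = ∑ j, lamt j • vecMulVec (ut j) (ut j))
    -- the rank-k truncated SVD of X and the pseudoinverse of (1/n) X_{PCA,k}ᵀ X_{PCA,k}
    (Xk : Matrix (Fin n) (Fin p) ℝ)
    (hXk : (1 / (n : ℝ)) • (Xkᵀ * Xk)
      = ∑ i ∈ Finset.univ.filter (fun i : Fin p => (i : ℕ) < k), lamt i • vecMulVec (ut i) (ut i))
    (Bdag : Matrix (Fin p) (Fin p) ℝ)
    (hBdag : IsMoorePenrose ((1 / (n : ℝ)) • (Xkᵀ * Xk)) Bdag)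
    -- the perturbation and the spectral condition
    (E : Matrix (Fin p) (Fin p) ℝ)
    (hE : E = Cxx - (1 / (n : ℝ)) • (Xᵀ * X))
    (hEk : ‖E‖ < lam ⟨k - 1, by omega⟩) :
    Matrix.trace (Bdag * Cxx)
        ≤ (k : ℝ) * lam ⟨0, by omega⟩ / (lam ⟨k - 1, by omega⟩ - ‖E‖) ∧
      (σ ^ 2 / (n : ℝ)) * Matrix.trace (Bdag * Cxx)
        ≤ (σ ^ 2 / (n : ℝ)) * ((k : ℝ) * lam ⟨0, by omega⟩ / (lam ⟨k - 1, by omega⟩ - ‖E‖)) := by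
  have hkp : k < p := hk.trans_le (min_le_right n p)
  set S := Finset.univ.filter (fun i : Fin p => (i : ℕ) < k)
  set δ := lam ⟨k - 1, by omega⟩ - ‖E‖
  have hδ : 0 < δ := sub_pos.mpr hEk
  have hweyl : δ ≤ lamt ⟨k - 1, by omega⟩ := by
    have := sub_l2_opNorm_sub_le_of_antitone hu_orth hut_orth hlam_anti hlamt_anti
      ⟨k - 1, by omega⟩
    rwa [← hCxx, ← hemp, ← hE] at this
  have hlamt (i : Fin p) (hi : i ∈ S) : δ ≤ lamt i :=
    hweyl.trans <| hlamt_anti _ _ <| Fin.le_def.mpr <|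
      Nat.le_sub_one_of_lt (Finset.mem_filter.mp hi).2
  have hBdag_eq : Bdag = ∑ i ∈ S, (lamt i)⁻¹ • vecMulVec (ut i) (ut i) :=
    hBdag.unique_s3 (hXk ▸ isMoorePenrose_sum_smul_vecMulVec hut_orth S
      fun i hi => (hδ.trans_le (hlamt i hi)).ne')
  have hquad (i : Fin p) : ut i ⬝ᵥ (Cxx *ᵥ ut i) ≤ lam ⟨0, by omega⟩ := by
    simpa [hCxx, hut_orth i i] using dotProduct_sum_smul_vecMulVec_mulVec_le hu_orth
      (t := lam ⟨0, by omega⟩) (v := ut i)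
      fun j _ => hlam_anti _ _ (Fin.le_def.mpr (Nat.zero_le _))
  have htrace : Matrix.trace (Bdag * Cxx) ≤ k * lam ⟨0, by omega⟩ / δ := by
    rw [hBdag_eq, trace_sum_smul_vecMulVec_mul]
    calc ∑ i ∈ S, (lamt i)⁻¹ * (ut i ⬝ᵥ (Cxx *ᵥ ut i)) ≤ ∑ i ∈ S, δ⁻¹ * lam ⟨0, by omega⟩ :=
          Finset.sum_le_sum fun i hi =>
            mul_le_mul_of_nonneg (inv_anti₀ hδ (hlamt i hi)) (hquad i)
              (inv_nonneg.mpr (hδ.trans_le (hlamt i hi)).le) (hlam_nonneg _)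
      _ = k * lam ⟨0, by omega⟩ / δ := by
          rw [Finset.sum_const, nsmul_eq_mul, Fin.card_filter_val_lt, min_eq_right hkp.le]
          ring
  exact ⟨htrace, mul_le_mul_of_nonneg_left htrace (by positivity)⟩
end
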